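/- arXiv:2108.13372 — 4 statements merged into one kernel-verified Lean document; each statement's English description precedes it below -/
import Mathlib

section
/- With Λ(t) as in the polarization-loss semigroup (entries damped by e^{-γ_H t}, e^{-γ_V t}, e^{-(γ_H+γ_V)t/2}), let ρ₁ = |H⟩⟨H| and ρ₂ = ½(|H⟩+|V⟩)(⟨H|+⟨V|). Then the trace distance between the normalized conditional states satisfies ½‖Λ(t)[ρ₁]/tr Λ(t)[ρ₁] − Λ(t)[ρ₂]/tr Λ(t)[ρ₂]‖₁ = (1 + e^{(γ_V−γ_H)t})^{−1/2}. -/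
open Matrix
open scoped ComplexOrder

/-- The trace norm `‖A‖₁ = tr √(AᴴA)` of a complex square matrix. -/
noncomputable def traceNorm {n : Type*} [Fintype n] [DecidableEq n]
    (A : Matrix n n ℂ) : ℝ :=
  (((Matrix.posSemidef_conjTranspose_mul_self A).isHermitian.eigenvectorUnitary.1 *
      diagonal (((↑) : ℝ → ℂ) ∘ (√·) ∘ (Matrix.posSemidef_conjTranspose_mul_self A).isHermitian.eigenvalues) *
      (star (Matrix.posSemidef_conjTranspose_mul_self A).isHermitian.eigenvectorUnitary :
        Matrix n n ℂ)).trace).re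

/-- The polarization-loss dynamics: entries damped by
`e^{-γ_H t}, e^{-(γ_H+γ_V)t/2}, e^{-γ_V t}`. -/
noncomputable def lossMap (γH γV t : ℝ) (ρ : Matrix (Fin 2) (Fin 2) ℂ) :
    Matrix (Fin 2) (Fin 2) ℂ :=
  !![(Real.exp (-(γH * t)) : ℂ) * ρ 0 0,
     (Real.exp (-((γH + γV) * t / 2)) : ℂ) * ρ 0 1;
     (Real.exp (-((γH + γV) * t / 2)) : ℂ) * ρ 1 0,
     (Real.exp (-(γV * t)) : ℂ) * ρ 1 1]

/-! Write `a = e^{-γ_H t}`, `b = e^{-γ_V t}`, `c = e^{-(γ_H+γ_V)t/2}`. The difference of the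
normalized states is the real traceless symmetric matrix `X = [[x, y], [y, -x]]` with
`x = b/(a+b)`, `y = -c/(a+b)`. Since `XᴴX = (x² + y²)·1`, its square root is scalar and
`‖X‖₁ = 2√(x² + y²)`; finally `c² = ab` collapses `x² + y²` to `b/(a+b) = (1 + a/b)⁻¹`. -/

section TraceNorm

variable {n : Type*} [Fintype n] [DecidableEq n]

open scoped MatrixOrder in
theorem traceNorm_eq_re_trace_sqrt (A : Matrix n n ℂ) :
    traceNorm A = (CFC.sqrt (Aᴴ * A)).trace.re := by
  have hA := Matrix.posSemidef_conjTranspose_mul_self A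
  have key := hA.isHermitian.cfc_eq Real.sqrt
  rw [Matrix.IsHermitian.cfc, Unitary.conjStarAlgAut_apply] at key
  rw [CFC.sqrt_eq_real_sqrt _ hA.nonneg, cfcₙ_eq_cfc (hf0 := Real.sqrt_zero), key]
  rfl

open scoped MatrixOrder in
theorem traceNorm_of_conjTranspose_mul_self_eq_smul_one (A : Matrix n n ℂ) {r : ℝ}
    (hr : 0 ≤ r) (h : Aᴴ * A = ((r ^ 2 : ℝ) : ℂ) • 1) :
    traceNorm A = Fintype.card n * r := by
  have hB : (0 : Matrix n n ℂ) ≤ (r : ℂ) • 1 := by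
    rw [Matrix.nonneg_iff_posSemidef, Matrix.smul_one_eq_diagonal]
    exact Matrix.PosSemidef.diagonal fun _ => Complex.zero_le_real.mpr hr
  rw [traceNorm_eq_re_trace_sqrt, h, Complex.ofReal_pow, ← one_pow 2, ← smul_pow,
    CFC.sqrt_sq _ hB]
  simp [mul_comm]

end TraceNorm

theorem traceNorm_fin_two_traceless (x y : ℝ) :
    traceNorm !![(x : ℂ), y; y, -x] = 2 * √(x ^ 2 + y ^ 2) := by
  rw [traceNorm_of_conjTranspose_mul_self_eq_smul_one _ (Real.sqrt_nonneg (x ^ 2 + y ^ 2))]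
  · simp
  · rw [Real.sq_sqrt (by positivity)]
    ext i j
    fin_cases i <;> fin_cases j <;> simp [Matrix.mul_apply, Fin.sum_univ_two] <;> ring

theorem lossMap_projH (γH γV t : ℝ) :
    lossMap γH γV t !![1, 0; 0, 0] = !![(Real.exp (-(γH * t)) : ℂ), 0; 0, 0] := by
  ext i j
  fin_cases i <;> fin_cases j <;> simp [lossMap]

theorem lossMap_projD (γH γV t : ℝ) :
    lossMap γH γV t ((1/2 : ℂ) • !![1, 1; 1, 1]) =
      (1/2 : ℂ) • !![(Real.exp (-(γH * t)) : ℂ), Real.exp (-((γH + γV) * t / 2));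
        Real.exp (-((γH + γV) * t / 2)), Real.exp (-(γV * t))] := by
  ext i j
  fin_cases i <;> fin_cases j <;> simp [lossMap, mul_comm]

theorem normalized_sub_normalized_eq {a b c : ℝ} (ha : 0 < a) (hb : 0 < b) :
    (!![(a : ℂ), 0; 0, 0].trace)⁻¹ • !![(a : ℂ), 0; 0, 0]
        - ((1/2 : ℂ) • !![(a : ℂ), c; c, b]).trace⁻¹ • ((1/2 : ℂ) • !![(a : ℂ), c; c, b])
      = !![((b / (a + b) : ℝ) : ℂ), ((-c / (a + b) : ℝ) : ℂ);
          ((-c / (a + b) : ℝ) : ℂ), -((b / (a + b) : ℝ) : ℂ)] := by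
  have ha' : (a : ℂ) ≠ 0 := Complex.ofReal_ne_zero.mpr ha.ne'
  have hab : (a : ℂ) + b ≠ 0 := by exact_mod_cast (add_pos ha hb).ne'
  ext i j
  fin_cases i <;> fin_cases j <;> simp [Matrix.trace_fin_two] <;> field_simp
  ring

theorem half_traceNorm_normalized_sub_normalized {a b c : ℝ} (ha : 0 < a) (hb : 0 < b)
    (hc : c ^ 2 = a * b) :
    (1/2 : ℝ) * traceNorm ((!![(a : ℂ), 0; 0, 0].trace)⁻¹ • !![(a : ℂ), 0; 0, 0]
        - ((1/2 : ℂ) • !![(a : ℂ), c; c, b]).trace⁻¹ • ((1/2 : ℂ) • !![(a : ℂ), c; c, b]))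
      = (1 + a / b) ^ (-(1/2) : ℝ) := by
  rw [normalized_sub_normalized_eq ha hb, traceNorm_fin_two_traceless]
  have hab : 0 < a + b := add_pos ha hb
  have hsq : (b / (a + b)) ^ 2 + (-c / (a + b)) ^ 2 = (1 + a / b)⁻¹ := by
    field_simp
    rw [hc]
    ring
  rw [hsq, Real.sqrt_eq_rpow, Real.rpow_neg (by positivity), Real.inv_rpow (by positivity)]
  ring

theorem stmt1_general (γH γV : ℝ) (t : ℝ)
    (ρ₁ ρ₂ : Matrix (Fin 2) (Fin 2) ℂ)
    (hρ₁ : ρ₁ = !![1, 0; 0, 0])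
    (hρ₂ : ρ₂ = (1/2 : ℂ) • !![1, 1; 1, 1]) :
    (1/2 : ℝ) * traceNorm
        ((lossMap γH γV t ρ₁).trace⁻¹ • lossMap γH γV t ρ₁
          - (lossMap γH γV t ρ₂).trace⁻¹ • lossMap γH γV t ρ₂)
      = (1 + Real.exp ((γV - γH) * t)) ^ (-(1/2) : ℝ) := by
  subst hρ₁ hρ₂
  have hc : Real.exp (-((γH + γV) * t / 2)) ^ 2 =
      Real.exp (-(γH * t)) * Real.exp (-(γV * t)) := by
    rw [← Real.exp_nat_mul, ← Real.exp_add]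
    ring_nf
  have hratio : Real.exp (-(γH * t)) / Real.exp (-(γV * t)) = Real.exp ((γV - γH) * t) := by
    rw [← Real.exp_sub]
    ring_nf
  rw [lossMap_projH, lossMap_projD,
    half_traceNorm_normalized_sub_normalized (Real.exp_pos _) (Real.exp_pos _) hc, hratio]

/-- For `ρ₁ = |H⟩⟨H|`, `ρ₂ = ½(|H⟩+|V⟩)(⟨H|+⟨V|)`, the trace distance between the
normalized conditional states equals `(1 + e^{(γ_V-γ_H)t})^{-1/2}`. -/
theorem stmt1 (γH γV : ℝ) (hH : 0 ≤ γH) (hV : 0 ≤ γV) (t : ℝ) (ht : 0 ≤ t)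
    (ρ₁ ρ₂ : Matrix (Fin 2) (Fin 2) ℂ)
    (hρ₁ : ρ₁ = !![1, 0; 0, 0])
    (hρ₂ : ρ₂ = (1/2 : ℂ) • !![1, 1; 1, 1]) :
    (1/2 : ℝ) * traceNorm
        ((lossMap γH γV t ρ₁).trace⁻¹ • lossMap γH γV t ρ₁
          - (lossMap γH γV t ρ₂).trace⁻¹ • lossMap γH γV t ρ₂)
      = (1 + Real.exp ((γV - γH) * t)) ^ (-(1/2) : ℝ) :=
  stmt1_general γH γV t ρ₁ ρ₂ hρ₁ hρ₂
end

section
/- If γ_H > γ_V ≥ 0, the function t ↦ √(1 − 8e^{−2γ_H t}/(3e^{−γ_H t} + e^{−γ_V t})²) is strictly monotonically increasing on [0,∞). -/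
/-!
Factoring `e^{-γ_H t}` out of the denominator turns the expression under the root into
`1 - 8 / (3 + e^{(γ_H - γ_V) t})²`. Since `γ_H > γ_V`, the quantity `3 + e^{(γ_H - γ_V) t}`
increases strictly with `t` and stays above `3 > √8`, and `x ↦ √(1 - 8 / x²)` is strictly
increasing on `[√8, ∞)`.
-/

open Real Set

lemma eight_mul_exp_div_sq_eq (a b t : ℝ) :
    8 * exp (-(2 * a * t)) / (3 * exp (-(a * t)) + exp (-(b * t))) ^ 2
      = 8 / (3 + exp ((a - b) * t)) ^ 2 := by
  have hfactor : 3 * exp (-(a * t)) + exp (-(b * t)) = exp (-(a * t)) * (3 + exp ((a - b) * t)) := by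
    rw [mul_add, ← exp_add]
    ring_nf
  have hsq : exp (-(2 * a * t)) = exp (-(a * t)) ^ 2 := by
    rw [← exp_nat_mul]
    push_cast
    ring_nf
  rw [hfactor, mul_pow, hsq]
  field_simp

lemma strictMonoOn_sqrt_one_sub_div_sq {k : ℝ} (hk : 0 < k) :
    StrictMonoOn (fun x : ℝ => √(1 - k / x ^ 2)) (Ici √k) := by
  intro x hx y _ hxy
  have hx0 : 0 < x := (sqrt_pos.mpr hk).trans_le hx
  have hkx : k ≤ x ^ 2 := (sq_sqrt hk.le).symm.le.trans (pow_le_pow_left₀ (sqrt_nonneg k) hx 2)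
  have hsq : x ^ 2 < y ^ 2 := pow_lt_pow_left₀ hxy hx0.le two_ne_zero
  have hdiv : k / y ^ 2 < k / x ^ 2 := div_lt_div_of_pos_left hk (by positivity) hsq
  have hnonneg : 0 ≤ 1 - k / x ^ 2 := sub_nonneg.mpr ((div_le_one (by positivity)).mpr hkx)
  exact sqrt_lt_sqrt hnonneg (by linarith)

lemma strictMono_three_add_exp_mul {c : ℝ} (hc : 0 < c) :
    StrictMono (fun t : ℝ => 3 + exp (c * t)) := fun _ _ hst =>
  add_lt_add_right (exp_lt_exp.mpr (mul_lt_mul_of_pos_left hst hc)) 3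

lemma sqrt_eight_le_three_add_exp (s : ℝ) : √8 ≤ 3 + exp s := by
  have h3 : √8 ≤ 3 := sqrt_le_iff.mpr ⟨by norm_num, by norm_num⟩
  linarith [exp_pos s]

theorem stmt4_general (γH γV : ℝ) (h : γH > γV) :
    StrictMonoOn (fun t : ℝ =>
        Real.sqrt (1 - 8 * Real.exp (-(2 * γH * t)) /
          (3 * Real.exp (-(γH * t)) + Real.exp (-(γV * t))) ^ 2))
      (Set.Ici (0 : ℝ)) := by
  simp only [eight_mul_exp_div_sq_eq]
  exact (strictMonoOn_sqrt_one_sub_div_sq (by norm_num)).comp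
    ((strictMono_three_add_exp_mul (sub_pos.mpr h)).strictMonoOn _)
    fun t _ => sqrt_eight_le_three_add_exp _

/-- If `γ_H > γ_V ≥ 0`, the function
`t ↦ √(1 − 8e^{−2γ_H t}/(3e^{−γ_H t} + e^{−γ_V t})²)` is strictly monotonically
increasing on `[0,∞)`. -/
theorem stmt4 (γH γV : ℝ) (h : γH > γV) (hV : 0 ≤ γV) :
    StrictMonoOn (fun t : ℝ =>
        Real.sqrt (1 - 8 * Real.exp (-(2 * γH * t)) /
          (3 * Real.exp (-(γH * t)) + Real.exp (-(γV * t))) ^ 2))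
      (Set.Ici (0 : ℝ)) :=
  stmt4_general γH γV h
end

section
/- Define γ_H(t) = γ(1 − ω cos(ωt)/(√(γ²+ω²) + γ sin(ωt))) and γ_V(t) = γ(1 + ω cos(ωt)/(√(γ²+ω²) − γ sin(ωt))) with γ > 0, ω > 0. Then γ_H(t) ≥ 0 and γ_V(t) ≥ 0 for all t ≥ 0. -/
/-!
By Cauchy–Schwarz, `|a cos θ + b sin θ| ≤ √(a² + b²)`. Hence `ω cos(ωt) - γ sin(ωt)` is at most
`√(γ² + ω²)`, i.e. the numerator `ω cos(ωt)` of `γ_H` never exceeds its denominator, which is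
nonnegative (a zero denominator gives the quotient `0`); `γ_V` is `γ_H` at the phase shifted by `π`.
-/

open Real

theorem abs_mul_cos_add_mul_sin_le_sqrt (a b θ : ℝ) :
    |a * cos θ + b * sin θ| ≤ √(a ^ 2 + b ^ 2) :=
  abs_le_sqrt <| by nlinarith [sin_sq_add_cos_sq θ, sq_nonneg (a * sin θ - b * cos θ)]

theorem mul_cos_div_sqrt_add_mul_sin_le_one (a b θ : ℝ) :
    a * cos θ / (√(b ^ 2 + a ^ 2) + b * sin θ) ≤ 1 := by
  have hnum := abs_mul_cos_add_mul_sin_le_sqrt a (-b) θ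
  have hden := abs_mul_cos_add_mul_sin_le_sqrt 0 b θ
  have hmono : √(0 ^ 2 + b ^ 2) ≤ √(b ^ 2 + a ^ 2) := sqrt_le_sqrt (by nlinarith)
  rw [neg_sq, add_comm (a ^ 2)] at hnum
  apply div_le_one_of_le₀ <;> linarith [abs_le.1 hnum, abs_le.1 hden]

theorem neg_one_le_mul_cos_div_sqrt_sub_mul_sin (a b θ : ℝ) :
    -1 ≤ a * cos θ / (√(b ^ 2 + a ^ 2) - b * sin θ) := by
  have h := mul_cos_div_sqrt_add_mul_sin_le_one a b (θ + π)
  rw [cos_add_pi, sin_add_pi, mul_neg, mul_neg, ← sub_eq_add_neg, neg_div] at h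
  linarith

theorem stmt7_general (γ ω : ℝ) (hγ : 0 < γ) (t : ℝ) :
    0 ≤ γ * (1 - ω * Real.cos (ω * t) /
        (Real.sqrt (γ ^ 2 + ω ^ 2) + γ * Real.sin (ω * t))) ∧
    0 ≤ γ * (1 + ω * Real.cos (ω * t) /
        (Real.sqrt (γ ^ 2 + ω ^ 2) - γ * Real.sin (ω * t))) :=
  ⟨mul_nonneg hγ.le (sub_nonneg.2 (mul_cos_div_sqrt_add_mul_sin_le_one ω γ (ω * t))),
    mul_nonneg hγ.le (by linarith [neg_one_le_mul_cos_div_sqrt_sub_mul_sin ω γ (ω * t)])⟩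

/-- With `γ_H(t) = γ(1 − ω cos(ωt)/(√(γ²+ω²) + γ sin(ωt)))` and
`γ_V(t) = γ(1 + ω cos(ωt)/(√(γ²+ω²) − γ sin(ωt)))`, `γ, ω > 0`, both rates are
nonnegative for all `t ≥ 0`. -/
theorem stmt7 (γ ω : ℝ) (hγ : 0 < γ) (hω : 0 < ω) (t : ℝ) (ht : 0 ≤ t) :
    0 ≤ γ * (1 - ω * Real.cos (ω * t) /
        (Real.sqrt (γ ^ 2 + ω ^ 2) + γ * Real.sin (ω * t))) ∧
    0 ≤ γ * (1 + ω * Real.cos (ω * t) /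
        (Real.sqrt (γ ^ 2 + ω ^ 2) - γ * Real.sin (ω * t))) :=
  stmt7_general γ ω hγ t
end

section
/- The functions p_H(t) = e^{−γt}(1 + (γ/√(γ²+ω²)) sin(ωt)) and p_V(t) = e^{−γt}(1 − (γ/√(γ²+ω²)) sin(ωt)) are nonincreasing on [0,∞) for all γ, ω > 0. -/
/-!
The derivative of `e^{-γt}(1 + k sin ωt)` is `e^{-γt}(k(ω cos ωt - γ sin ωt) - γ)`, and by
Cauchy–Schwarz `|ω cos ωt - γ sin ωt| ≤ √(γ² + ω²)`. So the derivative is nonpositive as soon as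
`|k| √(γ² + ω²) ≤ γ`, which holds with equality for `k = ±γ / √(γ² + ω²)`.
-/

open Real

lemma abs_mul_cos_sub_mul_sin_le (a b x : ℝ) : |a * cos x - b * sin x| ≤ √(a ^ 2 + b ^ 2) := by
  apply abs_le_sqrt
  nlinarith [sq_nonneg (a * sin x + b * cos x), sin_sq_add_cos_sq x]

lemma hasDerivAt_exp_mul_one_add_sin (γ ω k x : ℝ) :
    HasDerivAt (fun t => exp (-(γ * t)) * (1 + k * sin (ω * t)))
      (exp (-(γ * x)) * (k * (ω * cos (ω * x) - γ * sin (ω * x)) - γ)) x := by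
  have hexp : HasDerivAt (fun t => exp (-(γ * t))) (exp (-(γ * x)) * -γ) x := by
    simpa using ((hasDerivAt_id x).const_mul γ).neg.exp
  have hsin : HasDerivAt (fun t => 1 + k * sin (ω * t)) (k * (cos (ω * x) * ω)) x := by
    simpa using (((hasDerivAt_id x).const_mul ω).sin.const_mul k).const_add 1
  exact (hexp.mul hsin).congr_deriv (by ring)

lemma antitone_exp_mul_one_add_sin {γ ω k : ℝ} (hk : |k| * √(ω ^ 2 + γ ^ 2) ≤ γ) :
    Antitone (fun t => exp (-(γ * t)) * (1 + k * sin (ω * t))) := by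
  have hderiv := hasDerivAt_exp_mul_one_add_sin γ ω k
  refine antitone_of_deriv_nonpos (fun x => (hderiv x).differentiableAt) fun x => ?_
  rw [(hderiv x).deriv]
  have hosc : k * (ω * cos (ω * x) - γ * sin (ω * x)) ≤ γ :=
    calc k * (ω * cos (ω * x) - γ * sin (ω * x))
        ≤ |k| * |ω * cos (ω * x) - γ * sin (ω * x)| := (le_abs_self _).trans (abs_mul _ _).le
      _ ≤ |k| * √(ω ^ 2 + γ ^ 2) := by
          gcongr; exact abs_mul_cos_sub_mul_sin_le ω γ (ω * x)
      _ ≤ γ := hk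
  exact mul_nonpos_of_nonneg_of_nonpos (exp_pos _).le (by linarith)

theorem stmt9_general (γ ω : ℝ) (hγ : 0 < γ) :
    AntitoneOn (fun t : ℝ => Real.exp (-(γ * t)) *
        (1 + γ / Real.sqrt (γ ^ 2 + ω ^ 2) * Real.sin (ω * t))) (Set.Ici (0 : ℝ)) ∧
    AntitoneOn (fun t : ℝ => Real.exp (-(γ * t)) *
        (1 - γ / Real.sqrt (γ ^ 2 + ω ^ 2) * Real.sin (ω * t))) (Set.Ici (0 : ℝ)) := by
  have hr : 0 < √(γ ^ 2 + ω ^ 2) := sqrt_pos.mpr (by positivity)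
  have hk : |γ / √(γ ^ 2 + ω ^ 2)| * √(ω ^ 2 + γ ^ 2) ≤ γ := by
    rw [abs_div, abs_of_pos hγ, abs_of_pos hr, add_comm (ω ^ 2), div_mul_cancel₀ _ hr.ne']
  have hk' : |-(γ / √(γ ^ 2 + ω ^ 2))| * √(ω ^ 2 + γ ^ 2) ≤ γ := by rwa [abs_neg]
  refine ⟨(antitone_exp_mul_one_add_sin hk).antitoneOn _, ?_⟩
  simpa only [neg_mul, ← sub_eq_add_neg] using
    (antitone_exp_mul_one_add_sin hk').antitoneOn (Set.Ici 0)

/-- The success probabilities `p_H(t) = e^{−γt}(1 + (γ/√(γ²+ω²)) sin(ωt))` and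
`p_V(t) = e^{−γt}(1 − (γ/√(γ²+ω²)) sin(ωt))` are nonincreasing on `[0,∞)` for all
`γ, ω > 0`. -/
theorem stmt9 (γ ω : ℝ) (hγ : 0 < γ) (hω : 0 < ω) :
    AntitoneOn (fun t : ℝ => Real.exp (-(γ * t)) *
        (1 + γ / Real.sqrt (γ ^ 2 + ω ^ 2) * Real.sin (ω * t))) (Set.Ici (0 : ℝ)) ∧
    AntitoneOn (fun t : ℝ => Real.exp (-(γ * t)) *
        (1 - γ / Real.sqrt (γ ^ 2 + ω ^ 2) * Real.sin (ω * t))) (Set.Ici (0 : ℝ)) :=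
  stmt9_general γ ω hγ
end
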